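/- arXiv:2301.09696 — 2 statements merged into one kernel-verified Lean document; each statement's English description precedes it below -/
import Mathlib

section
/- For the convex function φ_JS(x) = x·log x − (1+x)·log((1+x)/2) on (0,∞), as x → ∞ we have φ_JS(x) = −log x + x·log 2 − 1 + log 2 + O(1/x); that is, φ_JS differs from φ_revKL(x) = −log x by an affine function of x up to O(1/x) error. -/
open Real Filter Asymptotics

/-! The difference is exactly `1 - (1 + x) log (1 + 1/x)`, and the elementary bounds
`t / (1 + t) ≤ log (1 + t) ≤ t` at `t = 1/x` squeeze `(1 + x) log (1 + 1/x)` between `1` and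
`1 + 1/x`. -/

lemma div_one_add_le_log_one_add {t : ℝ} (ht : -1 < t) : t / (1 + t) ≤ log (1 + t) := by
  have h := one_sub_inv_le_log_of_pos (by linarith : 0 < 1 + t)
  have h1 : (1 + t) ≠ 0 := by linarith
  calc t / (1 + t) = 1 - (1 + t)⁻¹ := by field_simp; ring
    _ ≤ log (1 + t) := h

lemma log_one_add_le_self {t : ℝ} (ht : -1 < t) : log (1 + t) ≤ t := by
  linarith [log_le_sub_one_of_pos (by linarith : 0 < 1 + t)]

lemma phiJS_sub_affine_eq {x : ℝ} (hx : 0 < x) :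
    (x * log x - (1 + x) * log ((1 + x) / 2)) - (-log x + x * log 2 - 1 + log 2)
      = 1 - (1 + x) * log (1 + 1 / x) := by
  have h : 1 + 1 / x = (1 + x) / x := by field_simp; ring
  rw [h, log_div (by positivity) hx.ne', log_div (by positivity) two_ne_zero]
  ring

lemma abs_one_sub_mul_log_one_add_inv_le {x : ℝ} (hx : 0 < x) :
    |1 - (1 + x) * log (1 + 1 / x)| ≤ 1 / x := by
  have ht : -1 < 1 / x := by linarith [one_div_pos.mpr hx]
  have hx1 : 0 ≤ 1 + x := by linarith
  have lower : 1 ≤ (1 + x) * log (1 + 1 / x) :=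
    calc (1 : ℝ) = (1 + x) * (1 / x / (1 + 1 / x)) := by field_simp; ring
      _ ≤ (1 + x) * log (1 + 1 / x) := by gcongr; exact div_one_add_le_log_one_add ht
  have upper : (1 + x) * log (1 + 1 / x) ≤ 1 + 1 / x :=
    calc (1 + x) * log (1 + 1 / x) ≤ (1 + x) * (1 / x) := by
          gcongr; exact log_one_add_le_self ht
      _ = 1 + 1 / x := by field_simp; ring
  rw [abs_le]
  constructor <;> linarith

/-- As x → ∞, φ_JS(x) = −log x + x·log 2 − 1 + log 2 + O(1/x). -/
theorem phiJS_expansion_at_top :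
    (fun x : ℝ =>
        (x * Real.log x - (1 + x) * Real.log ((1 + x) / 2))
          - (-Real.log x + x * Real.log 2 - 1 + Real.log 2))
      =O[atTop] (fun x : ℝ => 1 / x) := by
  refine IsBigO.of_bound 1 ?_
  filter_upwards [eventually_gt_atTop 0] with x hx
  rw [phiJS_sub_affine_eq hx, norm_eq_abs, norm_eq_abs, abs_of_pos (one_div_pos.mpr hx), one_mul]
  exact abs_one_sub_mul_log_one_add_inv_le hx
end

section
/- For fixed constants C > 0 and T > 0, the function ν ↦ ((1+ν)²)/(ν·T)·C on (0,∞) attains its unique minimum at ν = 1; consequently, when the noise distribution equals the data distribution (so the NCE asymptotic MSE is proportional to (1+ν)²/ν), the optimal noise proportion for a fixed total sample budget is 50%. -/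
/-! Writing the objective as `(C / T) · (1 + ν)² / ν`, everything rests on the identity
`(1 + ν)² / ν - 4 = (ν - 1)² / ν`: for `ν > 0` the right side is nonnegative and vanishes
only at `ν = 1`. -/

namespace NoiseProportion

variable {ν : ℝ}

lemma one_add_sq_div_sub_four (hν : ν ≠ 0) : (1 + ν) ^ 2 / ν - 4 = (ν - 1) ^ 2 / ν := by
  field_simp
  ring

lemma four_le_one_add_sq_div (hν : 0 < ν) : 4 ≤ (1 + ν) ^ 2 / ν := by
  have h_gap := one_add_sq_div_sub_four hν.ne'
  have h_gap_nonneg : 0 ≤ (ν - 1) ^ 2 / ν := by positivity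
  linarith

lemma one_add_sq_div_eq_four_iff (hν : 0 < ν) : (1 + ν) ^ 2 / ν = 4 ↔ ν = 1 := by
  rw [← sub_eq_zero, one_add_sq_div_sub_four hν.ne', div_eq_zero_iff, pow_eq_zero_iff two_ne_zero,
    sub_eq_zero, or_iff_left hν.ne']

end NoiseProportion

open NoiseProportion in
/-- The function ν ↦ ((1+ν)²/(νT))·C on (0,∞) attains its unique minimum at ν = 1:
with p_n = p_d, the optimal noise proportion for NCE is 50%. -/
theorem optimal_noise_proportion_half (C T : ℝ) (hC : 0 < C) (hT : 0 < T) :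
    (∀ ν ∈ Set.Ioi (0:ℝ),
      (1 + 1) ^ 2 / (1 * T) * C ≤ (1 + ν) ^ 2 / (ν * T) * C) ∧
    (∀ ν ∈ Set.Ioi (0:ℝ),
      (1 + ν) ^ 2 / (ν * T) * C = (1 + 1) ^ 2 / (1 * T) * C → ν = 1) := by
  have hK : 0 < C / T := div_pos hC hT
  have h_at_one : (1 + 1) ^ 2 / (1 * T) * C = 4 * (C / T) := by ring
  have h_factor : ∀ ν : ℝ, (1 + ν) ^ 2 / (ν * T) * C = (1 + ν) ^ 2 / ν * (C / T) :=
    fun ν => by ring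
  rw [h_at_one]
  simp only [h_factor]
  refine ⟨fun ν hν => ?_, fun ν hν h => ?_⟩
  · exact mul_le_mul_of_nonneg_right (four_le_one_add_sq_div hν) hK.le
  · exact (one_add_sq_div_eq_four_iff hν).mp (mul_right_cancel₀ hK.ne' h)
end
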